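/- arXiv:1909.09274 — 2 statements merged into one kernel-verified Lean document; each statement's English description precedes it below -/
import Mathlib

section
/- Let k ≥ 1 and let θ₁, ..., θ_k ∈ [0, π) be angles with ∑ θᵢ = 2mπ for some positive integer m. Then 2·∑_{i=1}^k sin(θᵢ/2) ≥ 4. -/
open Real

theorem stmt_9 (k : ℕ) (hk : 1 ≤ k) (θ : Fin k → ℝ)
    (hθ : ∀ i, θ i ∈ Set.Ico 0 π) (m : ℕ) (hm : 1 ≤ m)
    (hsum : ∑ i, θ i = 2 * m * π) :
    2 * ∑ i, Real.sin (θ i / 2) ≥ 4 := by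
  have hstep : ∀ i, 1 / π * θ i ≤ Real.sin (θ i / 2) := by
    intro i
    have h := (hθ i)
    have := Real.mul_le_sin (x := θ i / 2) (by linarith [h.1]) (by linarith [h.2])
    calc 1 / π * θ i = 2 / π * (θ i / 2) := by ring
    _ ≤ Real.sin (θ i / 2) := this
  have hsum' : ∑ i, (1 / π * θ i) ≤ ∑ i, Real.sin (θ i / 2) :=
    Finset.sum_le_sum fun i _ => hstep i
  have hpi : (0:ℝ) < π := Real.pi_pos
  have : ∑ i, (1 / π * θ i) = 2 * m := by
    rw [← Finset.mul_sum, hsum]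
    field_simp
  have hm' : (1:ℝ) ≤ m := by exact_mod_cast hm
  nlinarith
end

section
/- Let S ⊆ ℤ be nonempty, contain nℤ for some n ≥ 1, and be closed under the operation (i, j) ∈ S×S ↦ 2j - i ∈ S. If additionally whenever i, j ∈ S and i + j is even then (i+j)/2 ∈ S, then S = tℤ where t is the least positive element of S, and t is odd. -/
/-!
Reflecting through `a` and then through `b` translates by `2 (b - a)`, so a reflection-closed
set containing `0` and its least positive element `t` is a union of cosets of `2tℤ`. Minimality
of `t`, applied to a residue `r ∈ [0, 2t)` and to its mirror image `2t - r`, leaves only the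
residues `0` and `t`, hence `S = tℤ`. If `t` were even, `t / 2` would be a smaller positive
midpoint of `0` and `t`.
-/

def ReflectionClosed (S : Set ℤ) : Prop :=
  ∀ i ∈ S, ∀ j ∈ S, 2 * j - i ∈ S

namespace ReflectionClosed

variable {S : Set ℤ} {a b t x : ℤ}

theorem add_two_mul_sub_mem (hS : ReflectionClosed S) (ha : a ∈ S) (hb : b ∈ S) (hx : x ∈ S) :
    x + 2 * (b - a) ∈ S := by
  have := hS _ (hS x hx a ha) b hb
  rwa [show 2 * b - (2 * a - x) = x + 2 * (b - a) by ring] at this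

theorem sub_two_mul_sub_mem (hS : ReflectionClosed S) (ha : a ∈ S) (hb : b ∈ S) (hx : x ∈ S) :
    x - 2 * (b - a) ∈ S := by
  have := hS _ (hS x hx b hb) a ha
  rwa [show 2 * a - (2 * b - x) = x - 2 * (b - a) by ring] at this

theorem add_mul_two_mul_sub_mem (hS : ReflectionClosed S) (ha : a ∈ S) (hb : b ∈ S)
    (hx : x ∈ S) (m : ℤ) : x + m * (2 * (b - a)) ∈ S := by
  induction m using Int.induction_on with
  | zero => simpa using hx
  | succ k ih =>
    have := hS.add_two_mul_sub_mem ha hb ih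
    rwa [show x + k * (2 * (b - a)) + 2 * (b - a) = x + (k + 1) * (2 * (b - a)) by ring] at this
  | pred k ih =>
    have := hS.sub_two_mul_sub_mem ha hb ih
    rwa [show x + -k * (2 * (b - a)) - 2 * (b - a) = x + (-k - 1) * (2 * (b - a)) by ring] at this

theorem emod_two_mul_mem (hS : ReflectionClosed S) (h0 : 0 ∈ S) (ht : t ∈ S) (hx : x ∈ S) :
    x % (2 * t) ∈ S := by
  convert hS.add_mul_two_mul_sub_mem h0 ht hx (-(x / (2 * t))) using 1
  rw [Int.emod_def]
  ring

theorem dvd_of_mem_of_isLeast (hS : ReflectionClosed S) (h0 : 0 ∈ S)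
    (ht : IsLeast {u | u ∈ S ∧ 0 < u} t) (hx : x ∈ S) : t ∣ x := by
  obtain ⟨⟨htS, htpos⟩, hmin⟩ := ht
  set r := x % (2 * t)
  have hrS : r ∈ S := hS.emod_two_mul_mem h0 htS hx
  have hr_nonneg : 0 ≤ r := Int.emod_nonneg x (by omega)
  have hr_lt : r < 2 * t := Int.emod_lt_of_pos x (by omega)
  have hr : r = 0 ∨ r = t := by
    by_contra! hr
    have h₁ : t ≤ r := hmin ⟨hrS, by omega⟩
    have h₂ : t ≤ 2 * t - r := hmin ⟨hS r hrS t htS, by omega⟩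
    omega
  have hdvd : t ∣ r := by rcases hr with hr | hr <;> simp [hr]
  exact (EuclideanDomain.dvd_mod_iff (dvd_mul_left t 2)).mp hdvd

theorem mem_of_dvd (hS : ReflectionClosed S) (h0 : 0 ∈ S) (ht : t ∈ S) (hx : t ∣ x) : x ∈ S := by
  obtain ⟨c, rfl⟩ := hx
  rcases Int.even_or_odd' c with ⟨m, rfl | rfl⟩
  · convert hS.add_mul_two_mul_sub_mem h0 ht h0 m using 1
    ring
  · convert hS.add_mul_two_mul_sub_mem h0 ht ht m using 1
    ring

theorem eq_setOf_dvd_of_isLeast (hS : ReflectionClosed S) (h0 : 0 ∈ S)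
    (ht : IsLeast {u | u ∈ S ∧ 0 < u} t) : S = {x | t ∣ x} :=
  Set.ext fun _ => ⟨hS.dvd_of_mem_of_isLeast h0 ht, hS.mem_of_dvd h0 ht.1.1⟩

end ReflectionClosed

theorem odd_of_isLeast_of_midpoint_closed {S : Set ℤ} {t : ℤ} (h0 : 0 ∈ S)
    (hmid : ∀ i ∈ S, ∀ j ∈ S, Even (i + j) → (i + j) / 2 ∈ S)
    (ht : IsLeast {u | u ∈ S ∧ 0 < u} t) : Odd t := by
  obtain ⟨⟨htS, htpos⟩, hmin⟩ := ht
  by_contra hodd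
  obtain ⟨k, hk⟩ := Int.not_odd_iff_even.mp hodd
  have : t ≤ (t + 0) / 2 := hmin ⟨hmid t htS 0 h0 ⟨k, by omega⟩, by omega⟩
  omega

theorem stmt_16_general (S : Set ℤ)
    (hsub : ∃ n : ℤ, 1 ≤ n ∧ ∀ m : ℤ, n * m ∈ S)
    (hrefl : ∀ i ∈ S, ∀ j ∈ S, 2*j - i ∈ S)
    (hmid : ∀ i ∈ S, ∀ j ∈ S, Even (i + j) → (i + j) / 2 ∈ S)
    (t : ℤ) (ht : IsLeast {u : ℤ | u ∈ S ∧ 0 < u} t) :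
    S = {x : ℤ | t ∣ x} ∧ Odd t := by
  obtain ⟨n, -, hn⟩ := hsub
  have h0 : (0 : ℤ) ∈ S := by simpa using hn 0
  exact ⟨ReflectionClosed.eq_setOf_dvd_of_isLeast hrefl h0 ht,
    odd_of_isLeast_of_midpoint_closed h0 hmid ht⟩

theorem stmt_16 (S : Set ℤ) (hne : S.Nonempty)
    (hsub : ∃ n : ℤ, 1 ≤ n ∧ ∀ m : ℤ, n * m ∈ S)
    (hrefl : ∀ i ∈ S, ∀ j ∈ S, 2*j - i ∈ S)
    (hmid : ∀ i ∈ S, ∀ j ∈ S, Even (i + j) → (i + j) / 2 ∈ S)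
    (t : ℤ) (ht : IsLeast {u : ℤ | u ∈ S ∧ 0 < u} t) :
    S = {x : ℤ | t ∣ x} ∧ Odd t :=
  stmt_16_general S hsub hrefl hmid t ht
end
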